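/- arXiv:2512.00153 — 2 statements merged into one kernel-verified Lean document; each statement's English description precedes it below -/
import Mathlib

section
/- Let e_1, e_2 ∈ E and let f be a maximum (s,t)-flow of G with f(e_1) = 0 and f(e_2) = 1. Then the maximum (s,t)-flow value of G − {e_1, e_2} equals λ − 1 if and only if the two endpoints of e_2 are not strongly connected in the graph G_f − e_1; otherwise it equals λ. -/
/-!
In `G_f` the reversed `e₂` leads from `tgt e₂` to `src e₂`, so the endpoints of `e₂` are strongly
connected in `G_f − e₁` exactly when `src e₂` reaches `tgt e₂` there.

If it does, the path closes with the reversed `e₂` into a cycle of `G_f` avoiding `e₁`, and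
augmenting `f` along that cycle frees `e₂` without changing the value `λ`.

If it does not, no flow `g` of value `λ` vanishes on `e₁` and `e₂`: `g − f` would be a circulation
of `G_f` through the reversed `e₂`, which would then lie on a cycle avoiding `e₁`. A flow of value
`λ − 1` is obtained by cancelling one unit of `f` along an `s`–`t` path through `e₂`.
The paths come from a cut argument: on the set of vertices reachable along the support of `h`,
the total excess of `h` equals the amount of `h` entering the set, so it is nonnegative and at
least `h e` for every edge `e` entering the set.
-/

open Finset

/-- A finite directed multigraph on vertex type `V` with edge type `E`:
each edge `e` has a source `src e` and a target `tgt e`. -/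
structure Digraph' (V E : Type) where
  src : E → V
  tgt : E → V

namespace Digraph'

variable {V E : Type} [Fintype V] [DecidableEq V] [Fintype E] [DecidableEq E]

/-- `h : E → ℕ` satisfies flow conservation at every vertex other than `s` and `t`:
the sum over incoming edges equals the sum over outgoing edges. -/
def Conserves (G : Digraph' V E) (s t : V) (h : E → ℕ) : Prop :=
  ∀ v : V, v ≠ s → v ≠ t →
    ∑ e ∈ univ.filter (fun e => G.tgt e = v), h e =
      ∑ e ∈ univ.filter (fun e => G.src e = v), h e

/-- The value of `h`: the net flow out of `s`. -/
def flowValue (G : Digraph' V E) (s : V) (h : E → ℕ) : ℤ :=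
  (∑ e ∈ univ.filter (fun e => G.src e = s), (h e : ℤ)) -
    ∑ e ∈ univ.filter (fun e => G.tgt e = s), (h e : ℤ)

/-- An `(s,t)`-flow of a unit-capacity digraph: a `{0,1}`-valued function on edges
satisfying flow conservation at every vertex other than `s` and `t`. -/
def IsFlow (G : Digraph' V E) (s t : V) (f : E → ℕ) : Prop :=
  (∀ e, f e ≤ 1) ∧ G.Conserves s t f

/-- One step along an edge not belonging to `F`. -/
def stepAvoid (G : Digraph' V E) (F : Finset E) (u v : V) : Prop :=
  ∃ e, e ∉ F ∧ G.src e = u ∧ G.tgt e = v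

/-- Reachability by a directed path using no edge of `F`. -/
def ReachAvoid (G : Digraph' V E) (F : Finset E) : V → V → Prop :=
  Relation.ReflTransGen (G.stepAvoid F)

/-- `C` is an `(s,t)`-cut: after deleting the edges of `C` there is no directed
path from `s` to `t`. -/
def IsCut (G : Digraph' V E) (s t : V) (C : Finset E) : Prop :=
  ¬ G.ReachAvoid C s t

/-- An `(s,t)`-min-cut: an `(s,t)`-cut of minimum cardinality. -/
def IsMinCut (G : Digraph' V E) (s t : V) (C : Finset E) : Prop :=
  G.IsCut s t C ∧ ∀ C' : Finset E, G.IsCut s t C' → C.card ≤ C'.card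

/-- A minimal `(s,t)`-cut: no proper subset of it is an `(s,t)`-cut. -/
def IsMinimalCut (G : Digraph' V E) (s t : V) (C : Finset E) : Prop :=
  G.IsCut s t C ∧ ∀ C' : Finset E, C' ⊂ C → ¬ G.IsCut s t C'

/-- An edge is critical if it belongs to some `(s,t)`-min-cut. -/
def Critical (G : Digraph' V E) (s t : V) (e : E) : Prop :=
  ∃ C : Finset E, G.IsMinCut s t C ∧ e ∈ C

/-- `m` is the maximum `(s,t)`-flow value of `G − F`, i.e. the largest value of an
`(s,t)`-flow of `G` vanishing on every edge of `F`. -/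
def IsMaxFlowValue (G : Digraph' V E) (s t : V) (F : Finset E) (m : ℤ) : Prop :=
  (∃ f, G.IsFlow s t f ∧ (∀ e ∈ F, f e = 0) ∧ G.flowValue s f = m) ∧
    ∀ f, G.IsFlow s t f → (∀ e ∈ F, f e = 0) → G.flowValue s f ≤ m

/-- The residual graph `G_f` of a `{0,1}`-flow `f`: each edge with `f e = 1`
is reversed, each edge with `f e = 0` is kept as is. -/
def residual (G : Digraph' V E) (f : E → ℕ) : Digraph' V E where
  src e := if f e = 1 then G.tgt e else G.src e
  tgt e := if f e = 1 then G.src e else G.tgt e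

end Digraph'

namespace Digraph'

section Paths

variable {V E : Type} (H : Digraph' V E)

def stepVia (P : E → Prop) (u v : V) : Prop :=
  ∃ e, P e ∧ H.src e = u ∧ H.tgt e = v

variable {H}

theorem reflTransGen_stepVia_mono {P Q : E → Prop} (hPQ : ∀ e, P e → Q e) {a b : V}
    (h : Relation.ReflTransGen (H.stepVia P) a b) : Relation.ReflTransGen (H.stepVia Q) a b :=
  Relation.ReflTransGen.mono (fun _ _ ⟨e, he, hu, hv⟩ => ⟨e, hPQ e he, hu, hv⟩) _ _ h

theorem reflTransGen_stepVia_and_ne_or {P : E → Prop} {a b : V}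
    (h : Relation.ReflTransGen (H.stepVia P) a b) (e₀ : E) :
    Relation.ReflTransGen (H.stepVia fun e => P e ∧ e ≠ e₀) a b ∨
      Relation.ReflTransGen (H.stepVia fun e => P e ∧ e ≠ e₀) a (H.src e₀) := by
  induction h with
  | refl => exact .inl .refl
  | tail _ hstep ih =>
    obtain ⟨e, he, rfl, rfl⟩ := hstep
    refine ih.elim (fun hac => ?_) .inr
    by_cases h : e = e₀
    · subst h; exact .inr hac
    · exact .inl (hac.tail ⟨e, ⟨he, h⟩, rfl, rfl⟩)

theorem reachAvoid_iff {F : Finset E} {a b : V} :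
    H.ReachAvoid F a b ↔ Relation.ReflTransGen (H.stepVia (· ∉ F)) a b :=
  Iff.rfl

variable (H) in
def Walk : V → V → List E → Prop
  | a, b, [] => a = b
  | a, b, e :: T => H.src e = a ∧ Walk (H.tgt e) b T

theorem Walk.exists_of_append : ∀ {L M : List E} {a b : V},
    H.Walk a b (L ++ M) → ∃ c, H.Walk c b M
  | [], _, a, _, hW => ⟨a, hW⟩
  | _ :: _, _, _, _, hW => Walk.exists_of_append hW.2

theorem exists_nodup_walk {P : E → Prop} {a b : V}
    (h : Relation.ReflTransGen (H.stepVia P) a b) :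
    ∃ T : List E, T.Nodup ∧ H.Walk a b T ∧ ∀ e ∈ T, P e := by
  induction h using Relation.ReflTransGen.head_induction_on with
  | refl => exact ⟨[], List.nodup_nil, rfl, by simp⟩
  | head hstep _ ih =>
    obtain ⟨T, hT, hW, hP⟩ := ih
    obtain ⟨e, he, rfl, rfl⟩ := hstep
    by_cases hmem : e ∈ T
    · obtain ⟨T₁, T₂, rfl⟩ := List.append_of_mem hmem
      obtain ⟨_, -, hW₂⟩ := hW.exists_of_append
      refine ⟨e :: T₂, (List.nodup_append.1 hT).2.1, ⟨rfl, hW₂⟩, fun x hx => hP x ?_⟩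
      exact List.mem_append_right _ hx
    · exact ⟨e :: T, List.nodup_cons.2 ⟨hmem, hT⟩, ⟨rfl, hW⟩, List.forall_mem_cons.2 ⟨he, hP⟩⟩

end Paths

section Excess

variable {V E : Type} [DecidableEq V] (H : Digraph' V E)

def incidence (e : E) : V → ℤ :=
  Pi.single (H.tgt e) 1 - Pi.single (H.src e) 1

variable {H} in
theorem Walk.sum_incidence : ∀ {T : List E} {a b : V},
    H.Walk a b T → (T.map H.incidence).sum = Pi.single b 1 - Pi.single a 1
  | [], _, _, rfl => by simp
  | e :: _, _, _, hW => by
    rw [List.map_cons, List.sum_cons, Walk.sum_incidence hW.2, incidence, hW.1]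
    abel

variable [Fintype E]

def excess (h : E → ℕ) : V → ℤ :=
  ∑ e, (h e : ℤ) • H.incidence e

variable {H}

theorem sum_excess (h : E → ℕ) (R : Finset V) :
    ∑ v ∈ R, H.excess h v =
      ∑ e, (h e : ℤ) * ((if H.tgt e ∈ R then 1 else 0) - (if H.src e ∈ R then 1 else 0)) := by
  simp only [excess, incidence, Finset.sum_apply, Pi.smul_apply, Pi.sub_apply, smul_eq_mul]
  rw [Finset.sum_comm]
  simp only [← Finset.mul_sum, Finset.sum_sub_distrib, Finset.sum_pi_single']

theorem excess_apply (h : E → ℕ) (v : V) :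
    H.excess h v = ∑ e ∈ univ.filter (fun e => H.tgt e = v), (h e : ℤ) -
      ∑ e ∈ univ.filter (fun e => H.src e = v), (h e : ℤ) := by
  simpa [Finset.sum_filter, mul_sub, Finset.sum_sub_distrib] using sum_excess h {v}

theorem sum_excess_eq_sum_entering_of_closed {h : E → ℕ} {R : Finset V}
    (hR : ∀ e, h e ≠ 0 → H.src e ∈ R → H.tgt e ∈ R) :
    ∑ v ∈ R, H.excess h v =
      ∑ e ∈ univ.filter (fun e => H.tgt e ∈ R ∧ H.src e ∉ R), (h e : ℤ) := by
  rw [sum_excess, Finset.sum_filter]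
  refine Finset.sum_congr rfl fun e _ => ?_
  rcases eq_or_ne (h e) 0 with h0 | h0
  · simp [h0]
  by_cases hs : H.src e ∈ R
  · simp [hs, hR e h0 hs]
  · by_cases ht : H.tgt e ∈ R <;> simp [hs, ht]

end Excess

section ReachSet

variable {V E : Type} [Finite V] (H : Digraph' V E)

noncomputable def reachSet (h : E → ℕ) (x : V) : Finset V :=
  (Set.toFinite {v | Relation.ReflTransGen (H.stepVia (h · ≠ 0)) x v}).toFinset

variable {H}

theorem mem_reachSet {h : E → ℕ} {x v : V} :
    v ∈ H.reachSet h x ↔ Relation.ReflTransGen (H.stepVia (h · ≠ 0)) x v :=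
  Set.Finite.mem_toFinset _

theorem tgt_mem_reachSet {h : E → ℕ} {x : V} {e : E} (he : h e ≠ 0)
    (hs : H.src e ∈ H.reachSet h x) : H.tgt e ∈ H.reachSet h x :=
  mem_reachSet.2 ((mem_reachSet.1 hs).tail ⟨e, he, rfl, rfl⟩)

variable [DecidableEq V] [Fintype E]

theorem sum_excess_reachSet_nonneg (h : E → ℕ) (x : V) :
    0 ≤ ∑ v ∈ H.reachSet h x, H.excess h v := by
  rw [sum_excess_eq_sum_entering_of_closed fun _ he => tgt_mem_reachSet he]
  positivity

theorem le_sum_excess_reachSet {h : E → ℕ} {e : E}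
    (hn : ¬ Relation.ReflTransGen (H.stepVia (h · ≠ 0)) (H.tgt e) (H.src e)) :
    (h e : ℤ) ≤ ∑ v ∈ H.reachSet h (H.tgt e), H.excess h v := by
  rw [sum_excess_eq_sum_entering_of_closed fun _ he => tgt_mem_reachSet he]
  refine Finset.single_le_sum (f := fun e => (h e : ℤ)) (fun _ _ => by positivity) ?_
  simpa [mem_reachSet] using ⟨Relation.ReflTransGen.refl, hn⟩

theorem reflTransGen_of_excess_eq_zero {h : E → ℕ} (h0 : H.excess h = 0) {e : E}
    (he : h e ≠ 0) : Relation.ReflTransGen (H.stepVia (h · ≠ 0)) (H.tgt e) (H.src e) := by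
  by_contra hn
  have := le_sum_excess_reachSet hn
  simp only [h0, Pi.zero_apply, Finset.sum_const_zero] at this
  omega

end ReachSet

section Flows

variable {V E : Type} [DecidableEq V] [Fintype E] {G : Digraph' V E} {s t : V}

theorem conserves_iff_excess {h : E → ℕ} :
    G.Conserves s t h ↔ ∀ v, v ≠ s → v ≠ t → G.excess h v = 0 := by
  simp only [Conserves, excess_apply, sub_eq_zero, ← Nat.cast_sum, Nat.cast_inj]

theorem flowValue_eq_neg_excess (h : E → ℕ) : G.flowValue s h = -G.excess h s := by
  rw [flowValue, excess_apply]
  ring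

variable [Fintype V] in
theorem conserves_and_flowValue_iff (hst : s ≠ t) {g : E → ℕ} {m : ℤ} :
    G.Conserves s t g ∧ G.flowValue s g = m ↔ G.excess g = Pi.single t m - Pi.single s m := by
  rw [conserves_iff_excess, flowValue_eq_neg_excess]
  constructor
  · rintro ⟨hc, hv⟩
    have htotal : G.excess g s + G.excess g t = 0 := by
      rw [← Finset.sum_eq_add_of_mem s t (mem_univ _) (mem_univ _) hst
        (fun v _ hv => hc v hv.1 hv.2), sum_excess]
      simp
    funext v
    by_cases hvs : v = s
    · subst hvs; simp [hst]; omega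
    by_cases hvt : v = t
    · subst hvt; simp [Ne.symm hst]; omega
    simp [hvs, hvt, hc v hvs hvt]
  · intro h
    refine ⟨fun v hvs hvt => by simp [h, hvs, hvt], by simp [h, hst]⟩

end Flows

section Toggle

variable {E : Type} [DecidableEq E] {f : E → ℕ}

def toggle (f : E → ℕ) (T : List E) : E → ℕ :=
  fun e => if e ∈ T then 1 - f e else f e

theorem toggle_of_mem {T : List E} {e : E} (he : e ∈ T) : toggle f T e = 1 - f e :=
  if_pos he

theorem toggle_of_not_mem {T : List E} {e : E} (he : e ∉ T) : toggle f T e = f e :=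
  if_neg he

theorem toggle_le_one (hf : ∀ e, f e ≤ 1) (T : List E) (e : E) : toggle f T e ≤ 1 := by
  unfold toggle
  split_ifs <;> grind

theorem toggle_le {T : List E} (hT : ∀ e ∈ T, f e ≠ 0) (e : E) : toggle f T e ≤ f e := by
  unfold toggle
  split_ifs with he
  · have := hT e he; omega
  · rfl

end Toggle

section Residual

variable {V E : Type} {G : Digraph' V E} {f : E → ℕ}

theorem residual_src_of_eq_one {e : E} (h : f e = 1) : (G.residual f).src e = G.tgt e := by
  simp [residual, h]

theorem residual_tgt_of_eq_one {e : E} (h : f e = 1) : (G.residual f).tgt e = G.src e := by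
  simp [residual, h]

variable [DecidableEq V]

theorem residual_incidence (f : E → ℕ) (e : E) :
    (G.residual f).incidence e = if f e = 1 then -G.incidence e else G.incidence e := by
  unfold incidence
  by_cases h : f e = 1 <;> simp [residual, h]

variable [Fintype E]

/-- `g - f`, seen as a function on the edges of the residual graph `G.residual f`. -/
def residualDiff (f g : E → ℕ) : E → ℕ :=
  fun e => if f e = 1 then 1 - g e else g e

theorem excess_residual_residualDiff (hf : ∀ e, f e ≤ 1) {g : E → ℕ} (hg : ∀ e, g e ≤ 1) :
    (G.residual f).excess (residualDiff f g) = G.excess g - G.excess f := by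
  simp only [excess, ← Finset.sum_sub_distrib, ← sub_smul]
  refine Finset.sum_congr rfl fun e _ => ?_
  rw [residual_incidence]
  rcases Nat.le_one_iff_eq_zero_or_eq_one.1 (hf e) with h | h <;>
    rcases Nat.le_one_iff_eq_zero_or_eq_one.1 (hg e) with h' | h' <;>
    simp [residualDiff, h, h']

theorem excess_residual_self (hf : ∀ e, f e ≤ 1) : (G.residual f).excess f = -G.excess f := by
  simp only [excess, ← Finset.sum_neg_distrib]
  refine Finset.sum_congr rfl fun e _ => ?_
  rw [residual_incidence]
  rcases Nat.le_one_iff_eq_zero_or_eq_one.1 (hf e) with h | h <;> simp [h]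

variable [DecidableEq E]

theorem excess_toggle (hf : ∀ e, f e ≤ 1) {T : List E} (hT : T.Nodup) {a b : V}
    (hW : (G.residual f).Walk a b T) :
    G.excess (toggle f T) = G.excess f + Pi.single b 1 - Pi.single a 1 := by
  have hdiff : G.excess (toggle f T) - G.excess f =
      ∑ e ∈ T.toFinset, (G.residual f).incidence e := by
    simp only [excess, ← Finset.sum_sub_distrib, ← sub_smul]
    rw [← Finset.univ_inter T.toFinset, ← Finset.sum_ite_mem]
    refine Finset.sum_congr rfl fun e _ => ?_
    rw [residual_incidence]
    by_cases he : e ∈ T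
    · rcases Nat.le_one_iff_eq_zero_or_eq_one.1 (hf e) with h | h <;>
        simp [toggle_of_mem he, he, h]
    · simp [toggle_of_not_mem he, he]
  rw [List.sum_toFinset _ hT, hW.sum_incidence, sub_eq_iff_eq_add'] at hdiff
  rw [hdiff]
  abel

end Residual

section MaxFlow

variable {V E : Type} [DecidableEq V] [Fintype E] {G : Digraph' V E} {s t : V}

theorem IsMaxFlowValue.unique {F : Finset E} {m m' : ℤ} (h : G.IsMaxFlowValue s t F m)
    (h' : G.IsMaxFlowValue s t F m') : m = m' := by
  obtain ⟨⟨g, hg, hgF, rfl⟩, hle⟩ := h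
  obtain ⟨⟨g', hg', hg'F, rfl⟩, hle'⟩ := h'
  exact le_antisymm (hle' g hg hgF) (hle g' hg' hg'F)

variable [Fintype V] {f : E → ℕ} {lam : ℕ} {e₁ e₂ : E}

theorem flowValue_le_pred_of_not_reachAvoid (hst : s ≠ t) (hmax : G.IsMaxFlowValue s t ∅ lam)
    (hf : G.IsFlow s t f) (hval : G.flowValue s f = lam) (hf1 : f e₁ = 0) (hf2 : f e₂ = 1)
    (hns : ¬ (G.residual f).ReachAvoid {e₁} (G.src e₂) (G.tgt e₂))
    {g : E → ℕ} (hg : G.IsFlow s t g) (hg1 : g e₁ = 0) (hg2 : g e₂ = 0) :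
    G.flowValue s g ≤ lam - 1 := by
  refine Int.le_sub_one_of_lt (lt_of_le_of_ne (hmax.2 g hg (by simp)) fun heq => hns ?_)
  have hexc : G.excess g = G.excess f := by
    rw [(conserves_and_flowValue_iff hst).1 ⟨hg.2, heq⟩,
      (conserves_and_flowValue_iff hst).1 ⟨hf.2, hval⟩]
  have hcirc : (G.residual f).excess (residualDiff f g) = 0 := by
    rw [excess_residual_residualDiff hf.1 hg.1, hexc, sub_self]
  have hcycle := reflTransGen_of_excess_eq_zero hcirc (e := e₂) (by simp [residualDiff, hf2, hg2])
  rw [residual_tgt_of_eq_one hf2, residual_src_of_eq_one hf2] at hcycle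
  refine reflTransGen_stepVia_mono (fun e he => ?_) hcycle
  rintro he₁
  rw [Finset.mem_singleton.1 he₁] at he
  simp [residualDiff, hf1, hg1] at he

theorem pos_and_reflTransGen_src_of_not_reachAvoid (hst : s ≠ t) (hf : G.IsFlow s t f)
    (hval : G.flowValue s f = lam) (hf1 : f e₁ = 0) (hf2 : f e₂ = 1)
    (hns : ¬ (G.residual f).ReachAvoid {e₁} (G.src e₂) (G.tgt e₂)) :
    0 < lam ∧
      Relation.ReflTransGen ((G.residual f).stepVia fun e => f e ≠ 0 ∧ e ≠ e₂) (G.src e₂) s := by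
  have hsrc := residual_src_of_eq_one (G := G) hf2
  have htgt := residual_tgt_of_eq_one (G := G) hf2
  have hnr : ¬ Relation.ReflTransGen ((G.residual f).stepVia (f · ≠ 0))
      ((G.residual f).tgt e₂) ((G.residual f).src e₂) := by
    rw [htgt, hsrc]
    refine fun h => hns (reflTransGen_stepVia_mono (fun e he he₁ => ?_) h)
    rw [Finset.mem_singleton.1 he₁] at he
    exact he hf1
  have hsum := le_sum_excess_reachSet hnr
  rw [excess_residual_self hf.1, (conserves_and_flowValue_iff hst).1 ⟨hf.2, hval⟩, hf2] at hsum
  obtain ⟨hs, hlam⟩ : s ∈ (G.residual f).reachSet f ((G.residual f).tgt e₂) ∧ 0 < lam := by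
    simp only [Pi.neg_apply, Pi.sub_apply, Finset.sum_neg_distrib, Finset.sum_sub_distrib,
      Finset.sum_pi_single'] at hsum
    split_ifs at hsum <;> grind
  refine ⟨hlam, ?_⟩
  rw [mem_reachSet] at hs
  have hpath := (reflTransGen_stepVia_and_ne_or hs e₂).resolve_right
    fun h => hnr (reflTransGen_stepVia_mono (fun _ he => he.1) h)
  rwa [htgt] at hpath

variable [DecidableEq E]

theorem isMaxFlowValue_pair_of_reachAvoid (hst : s ≠ t) (hmax : G.IsMaxFlowValue s t ∅ lam)
    (hf : G.IsFlow s t f) (hval : G.flowValue s f = lam) (hf1 : f e₁ = 0) (hf2 : f e₂ = 1)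
    (hreach : (G.residual f).ReachAvoid {e₁} (G.src e₂) (G.tgt e₂)) :
    G.IsMaxFlowValue s t {e₁, e₂} lam := by
  have hsrc := residual_src_of_eq_one (G := G) hf2
  have htgt := residual_tgt_of_eq_one (G := G) hf2
  obtain ⟨T, hT, hW, hTe⟩ := exists_nodup_walk <|
    (reflTransGen_stepVia_and_ne_or (reachAvoid_iff.1 hreach) e₂).elim id (hsrc ▸ id)
  have he₂T : e₂ ∉ T := fun h => (hTe e₂ h).2 rfl
  have he₁ : e₁ ∉ e₂ :: T := by
    rw [List.mem_cons]
    rintro (rfl | h)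
    · omega
    · exact (hTe e₁ h).1 (Finset.mem_singleton_self e₁)
  -- the path closes up with the reversed `e₂` into a cycle of the residual graph
  have hexc : G.excess (toggle f (e₂ :: T)) = G.excess f := by
    rw [excess_toggle hf.1 (List.nodup_cons.2 ⟨he₂T, hT⟩) ⟨hsrc, htgt ▸ hW⟩]
    abel
  have hflow := (conserves_and_flowValue_iff hst).1 ⟨hf.2, hval⟩
  rw [← hexc, ← conserves_and_flowValue_iff hst] at hflow
  refine ⟨⟨_, ⟨toggle_le_one hf.1 _, hflow.1⟩, ?_, hflow.2⟩, fun g hg _ => hmax.2 g hg (by simp)⟩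
  simp only [Finset.mem_insert, Finset.mem_singleton, forall_eq_or_imp, forall_eq]
  rw [toggle_of_not_mem he₁, toggle_of_mem List.mem_cons_self, hf1, hf2]
  exact ⟨rfl, rfl⟩

theorem exists_flow_pred_of_not_reachAvoid (hst : s ≠ t) (hf : G.IsFlow s t f)
    (hval : G.flowValue s f = lam) (hf1 : f e₁ = 0) (hf2 : f e₂ = 1)
    (hns : ¬ (G.residual f).ReachAvoid {e₁} (G.src e₂) (G.tgt e₂)) :
    ∃ g, G.IsFlow s t g ∧ g e₁ = 0 ∧ g e₂ = 0 ∧ G.flowValue s g = lam - 1 := by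
  have hsrc := residual_src_of_eq_one (G := G) hf2
  have hexc := (conserves_and_flowValue_iff hst).1 ⟨hf.2, hval⟩
  obtain ⟨hlam, hpath⟩ := pos_and_reflTransGen_src_of_not_reachAvoid hst hf hval hf1 hf2 hns
  obtain ⟨T, hT, hW, hTe⟩ := exists_nodup_walk hpath
  -- first remove a unit of flow on a path from `s` through `e₂` ...
  set f₂ := toggle f (e₂ :: T) with hf₂
  have hf₂le : ∀ e, f₂ e ≤ f e :=
    toggle_le (List.forall_mem_cons.2 ⟨by omega, fun e he => (hTe e he).1⟩)
  have hf₂1 : ∀ e, f₂ e ≤ 1 := toggle_le_one hf.1 _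
  have hf₂e₂ : f₂ e₂ = 0 := by rw [hf₂, toggle_of_mem List.mem_cons_self, hf2]
  have hexc₂ : G.excess f₂ =
      Pi.single t (lam : ℤ) - Pi.single s (lam : ℤ) + Pi.single s 1 - Pi.single (G.tgt e₂) 1 := by
    rw [excess_toggle hf.1 (List.nodup_cons.2 ⟨fun h => (hTe e₂ h).2 rfl, hT⟩)
      ⟨hsrc, residual_tgt_of_eq_one hf2 ▸ hW⟩, hexc]
  -- ... then a unit from `tgt e₂` to `t`: of the `lam` units of `f₂` reaching `t`
  -- at most `lam - 1` come from `s`, so one of them comes from `tgt e₂`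
  have hreach : G.tgt e₂ ∈ (G.residual f₂).reachSet f₂ t := by
    have hsum := sum_excess_reachSet_nonneg (H := G.residual f₂) f₂ t
    rw [excess_residual_self hf₂1, hexc₂] at hsum
    have ht : t ∈ (G.residual f₂).reachSet f₂ t := mem_reachSet.2 .refl
    by_contra h
    simp [Finset.sum_add_distrib, Finset.sum_sub_distrib, Finset.sum_pi_single', ht, h] at hsum
    split_ifs at hsum <;> omega
  obtain ⟨T₁, hT₁, hW₁, hT₁e⟩ := exists_nodup_walk (mem_reachSet.1 hreach)
  have hexc₃ : G.excess (toggle f₂ T₁) =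
      Pi.single t ((lam : ℤ) - 1) - Pi.single s ((lam : ℤ) - 1) := by
    rw [excess_toggle hf₂1 hT₁ hW₁, hexc₂, Pi.single_sub, Pi.single_sub]
    abel
  obtain ⟨hcons, hvalue⟩ := (conserves_and_flowValue_iff hst).2 hexc₃
  have hf₃le : ∀ e, toggle f₂ T₁ e ≤ f₂ e := toggle_le hT₁e
  refine ⟨toggle f₂ T₁, ⟨toggle_le_one hf₂1 _, hcons⟩, ?_, ?_, hvalue⟩
  · have := hf₃le e₁; have := hf₂le e₁; omega
  · have := hf₃le e₂; omega

end MaxFlow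

end Digraph'

/-- Let `e₁, e₂ ∈ E` and let `f` be a maximum `(s,t)`-flow of `G`
with `f e₁ = 0` and `f e₂ = 1`. Then the maximum `(s,t)`-flow value of `G − {e₁,e₂}`
equals `λ − 1` iff the endpoints of `e₂` are not strongly connected in `G_f − e₁`;
otherwise it equals `λ`. -/
theorem stmt12 {V E : Type} [Fintype V] [DecidableEq V] [Fintype E] [DecidableEq E]
    (G : Digraph' V E) (s t : V) (hst : s ≠ t)
    (lam : ℕ) (hmax : G.IsMaxFlowValue s t ∅ lam)
    (e₁ e₂ : E) (f : E → ℕ) (hf : G.IsFlow s t f) (hval : G.flowValue s f = lam)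
    (hf1 : f e₁ = 0) (hf2 : f e₂ = 1) :
    (G.IsMaxFlowValue s t {e₁, e₂} ((lam : ℤ) - 1) ↔
      ¬ ((G.residual f).ReachAvoid {e₁} (G.src e₂) (G.tgt e₂) ∧
          (G.residual f).ReachAvoid {e₁} (G.tgt e₂) (G.src e₂))) ∧
    (((G.residual f).ReachAvoid {e₁} (G.src e₂) (G.tgt e₂) ∧
        (G.residual f).ReachAvoid {e₁} (G.tgt e₂) (G.src e₂)) →
      G.IsMaxFlowValue s t {e₁, e₂} lam) := by
  have hne : e₂ ≠ e₁ := by rintro rfl; omega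
  have hback : (G.residual f).ReachAvoid {e₁} (G.tgt e₂) (G.src e₂) :=
    .single ⟨e₂, by simpa using hne, Digraph'.residual_src_of_eq_one hf2,
      Digraph'.residual_tgt_of_eq_one hf2⟩
  have hcase := Digraph'.isMaxFlowValue_pair_of_reachAvoid hst hmax hf hval hf1 hf2
  refine ⟨⟨fun hpred hsc => ?_, fun hnsc => ?_⟩, fun hsc => hcase hsc.1⟩
  · have := hpred.unique (hcase hsc.1)
    omega
  · have hns := fun h => hnsc ⟨h, hback⟩
    obtain ⟨g, hg, hg1, hg2, hgv⟩ :=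
      Digraph'.exists_flow_pred_of_not_reachAvoid hst hf hval hf1 hf2 hns
    refine ⟨⟨g, hg, by simp [hg1, hg2], hgv⟩, fun g' hg' hvan => ?_⟩
    exact Digraph'.flowValue_le_pred_of_not_reachAvoid hst hmax hf hval hf1 hf2 hns hg'
      (hvan e₁ (by simp)) (hvan e₂ (by simp))
end

section
/- Let F be a set of k edges of G (with k ≤ λ). Then the maximum (s,t)-flow value of G − F equals λ − k if and only if there exists an (s,t)-min-cut of G containing all the edges of F. -/
/-!
By max-flow min-cut for `G − F`, the maximum flow value of `G − F` is the least value of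
`|C \ F|` over the `(s,t)`-cuts `C` of `G`. Every cut satisfies
`|C \ F| = |C| - |C ∩ F| ≥ λ - k`, with equality exactly when `|C| = λ` and `F ⊆ C`; so the
minimum is `λ - k` precisely when some min-cut contains `F`. Max-flow min-cut itself is
proved by augmenting paths: a flow of maximum value has no augmenting path in its residual
graph, and the edges leaving the set of vertices reachable there form a cut whose edges
outside `F` are all saturated.
-/

open Finset

namespace Digraph'

variable {V E : Type}

section NetFlow

variable [DecidableEq V] [Fintype E] (G : Digraph' V E)

def boundary (X : Finset V) (e : E) : ℤ :=
  (if G.src e ∈ X then 1 else 0) - (if G.tgt e ∈ X then 1 else 0)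

def netOut (f : E → ℤ) (X : Finset V) : ℤ :=
  ∑ e, f e * G.boundary X e

lemma flowValue_eq_netOut (s : V) (f : E → ℕ) :
    G.flowValue s f = G.netOut (fun e => f e) {s} := by
  simp only [flowValue, netOut, boundary, mem_singleton, sum_filter, ← sum_sub_distrib]
  refine sum_congr rfl fun e _ => ?_
  split_ifs <;> ring

lemma conserves_iff (s t : V) (f : E → ℕ) :
    G.Conserves s t f ↔ ∀ v, v ≠ s → v ≠ t → G.netOut (fun e => f e) {v} = 0 := by
  refine forall₃_congr fun v _ _ => ?_
  rw [← flowValue_eq_netOut, flowValue, sub_eq_zero, ← Nat.cast_sum, ← Nat.cast_sum,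
    Nat.cast_inj, eq_comm]

lemma netOut_eq_sum_netOut_singleton (f : E → ℤ) (X : Finset V) :
    G.netOut f X = ∑ v ∈ X, G.netOut f {v} := by
  simp only [netOut]
  rw [sum_comm]
  refine sum_congr rfl fun e _ => ?_
  rw [← mul_sum]
  simp [boundary, sum_sub_distrib]

lemma flowValue_eq_netOut_of_mem {s t : V} {f : E → ℕ} (hf : G.Conserves s t f)
    {X : Finset V} (hs : s ∈ X) (ht : t ∉ X) :
    G.flowValue s f = G.netOut (fun e => f e) X := by
  rw [netOut_eq_sum_netOut_singleton, sum_eq_single_of_mem s hs, flowValue_eq_netOut]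
  intro v hv hvs
  exact (G.conserves_iff s t f).1 hf v hvs (by rintro rfl; exact ht hv)

end NetFlow

section Cuts

variable {G : Digraph' V E}

lemma ReachAvoid.of_closed {F : Finset E} {P : V → Prop}
    (hP : ∀ e, e ∉ F → P (G.src e) → P (G.tgt e)) {u v : V} (h : G.ReachAvoid F u v)
    (hu : P u) : P v := by
  induction h with
  | refl => exact hu
  | tail _ hstep ih =>
    obtain ⟨e, heF, rfl, rfl⟩ := hstep
    exact hP e heF ih

lemma ReachAvoid.tail_edge {F : Finset E} {u : V} {e : E} (h : G.ReachAvoid F u (G.src e))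
    (he : e ∉ F) : G.ReachAvoid F u (G.tgt e) :=
  Relation.ReflTransGen.tail h ⟨e, he, rfl, rfl⟩

lemma isCut_univ [Fintype E] {s t : V} (hst : s ≠ t) : G.IsCut s t univ := fun h =>
  hst (h.of_closed (P := (· = s)) (fun e he => absurd (mem_univ e) he) rfl).symm

variable [Fintype V] [DecidableEq V] [Fintype E] [DecidableEq E]

theorem flowValue_le_card_sdiff {s t : V} {F C : Finset E} {f : E → ℕ} (hf : G.IsFlow s t f)
    (hfF : ∀ e ∈ F, f e = 0) (hC : G.IsCut s t C) : G.flowValue s f ≤ #(C \ F) := by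
  classical
  set X := univ.filter (G.ReachAvoid C s)
  have hleave : ∀ e, G.src e ∈ X → G.tgt e ∉ X → e ∈ C := by
    intro e hs ht
    by_contra he
    simp only [X, mem_filter, mem_univ, true_and] at hs ht
    exact ht (hs.tail_edge he)
  have hs : s ∈ X := by simpa [X] using .refl
  have ht : t ∉ X := by simpa [X, IsCut] using hC
  rw [G.flowValue_eq_netOut_of_mem hf.2 hs ht]
  calc G.netOut (fun e => f e) X ≤ ∑ e, if e ∈ C \ F then 1 else 0 := by
        refine sum_le_sum fun e _ => ?_
        by_cases heF : e ∈ F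
        · simp only [hfF e heF, Nat.cast_zero, zero_mul]
          split_ifs <;> norm_num
        have := hf.1 e
        have := hleave e
        simp only [boundary, mem_sdiff]
        split_ifs <;> simp_all
    _ = #(C \ F) := by rw [sum_boole, filter_mem_eq_inter, univ_inter]

theorem exists_isCut_of_not_reachAvoid_residual {s t : V} {F : Finset E} {f : E → ℕ}
    (hf : G.IsFlow s t f) (hfF : ∀ e ∈ F, f e = 0) (h : ¬ (G.residual f).ReachAvoid F s t) :
    ∃ C, G.IsCut s t C ∧ G.flowValue s f = #(C \ F) := by
  classical
  set X := univ.filter ((G.residual f).ReachAvoid F s)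
  have hstep : ∀ e, e ∉ F → (G.residual f).src e ∈ X → (G.residual f).tgt e ∈ X := by
    intro e he hs
    simp only [X, mem_filter, mem_univ, true_and] at hs ⊢
    exact hs.tail_edge he
  have ht : t ∉ X := by simpa [X] using h
  set C := univ.filter fun e => G.src e ∈ X ∧ G.tgt e ∉ X
  refine ⟨C, fun hreach => ht ?_, ?_⟩
  · refine hreach.of_closed (P := (· ∈ X)) (fun e he hs => ?_) (by simpa [X] using .refl)
    by_contra ht'
    exact he (by simp [C, hs, ht'])
  rw [G.flowValue_eq_netOut_of_mem hf.2 (X := X) (by simpa [X] using .refl) ht, netOut]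
  calc ∑ e, (f e : ℤ) * G.boundary X e = ∑ e, if e ∈ C \ F then 1 else 0 := by
        refine sum_congr rfl fun e _ => ?_
        by_cases heF : e ∈ F
        · simp [hfF e heF, heF]
        rcases (by have := hf.1 e; omega : f e = 0 ∨ f e = 1) with h0 | h1
        · have hfwd : G.src e ∈ X → G.tgt e ∈ X := by simpa [residual, h0] using hstep e heF
          simp only [boundary, h0, C, mem_sdiff, mem_filter, mem_univ, true_and]
          split_ifs <;> simp_all
        · have hbwd : G.tgt e ∈ X → G.src e ∈ X := by simpa [residual, h1] using hstep e heF
          simp only [boundary, h1, C, mem_sdiff, mem_filter, mem_univ, true_and]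
          split_ifs <;> simp_all
    _ = #(C \ F) := by rw [sum_boole, filter_mem_eq_inter, univ_inter]

end Cuts

section AugmentingPaths

def IsWalk (H : Digraph' V E) (F : Finset E) : V → List E → V → Prop
  | u, [], v => u = v
  | u, e :: l, v => e ∉ F ∧ H.src e = u ∧ H.IsWalk F (H.tgt e) l v

variable {H : Digraph' V E} {F : Finset E}

lemma exists_isWalk_of_reachAvoid {u v : V} (h : H.ReachAvoid F u v) :
    ∃ l, H.IsWalk F u l v := by
  induction h using Relation.ReflTransGen.head_induction_on with
  | refl => exact ⟨[], rfl⟩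
  | head hstep _ ih =>
    obtain ⟨e, heF, rfl, rfl⟩ := hstep
    obtain ⟨l, hl⟩ := ih
    exact ⟨e :: l, heF, rfl, hl⟩

lemma IsWalk.notMem {u w : V} {l : List E} (h : H.IsWalk F u l w) {e : E} (he : e ∈ l) :
    e ∉ F := by
  induction l generalizing u with
  | nil => simp at he
  | cons a l ih =>
    obtain ⟨haF, -, h⟩ := h
    rcases List.mem_cons.1 he with rfl | he
    exacts [haF, ih h he]

lemma IsWalk.exists_suffix {u w v : V} {l : List E} (h : H.IsWalk F u l w)
    (hv : v ∈ u :: l.map H.tgt) :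
    ∃ l', H.IsWalk F v l' w ∧ (v :: l'.map H.tgt) <:+ (u :: l.map H.tgt) := by
  induction l generalizing u with
  | nil =>
    obtain rfl : v = u := by simpa using hv
    exact ⟨[], h, List.suffix_refl _⟩
  | cons e l ih =>
    rcases List.mem_cons.1 hv with rfl | hv
    · exact ⟨e :: l, h, List.suffix_refl _⟩
    · obtain ⟨l', hl', hsuf⟩ := ih h.2.2 hv
      exact ⟨l', hl', hsuf.trans (List.suffix_cons u _)⟩

lemma IsWalk.exists_nodup {u w : V} {l : List E} (h : H.IsWalk F u l w) :
    ∃ l', H.IsWalk F u l' w ∧ (u :: l'.map H.tgt).Nodup := by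
  induction l generalizing u with
  | nil => exact ⟨[], h, List.nodup_singleton u⟩
  | cons e l ih =>
    obtain ⟨heF, hsrc, hl⟩ := h
    obtain ⟨l', hl', hnd⟩ := ih hl
    by_cases hu : u ∈ H.tgt e :: l'.map H.tgt
    · obtain ⟨l'', hl'', hsuf⟩ := hl'.exists_suffix hu
      exact ⟨l'', hl'', hnd.sublist hsuf.sublist⟩
    · exact ⟨e :: l', ⟨heF, hsrc, hl'⟩, List.nodup_cons.2 ⟨hu, hnd⟩⟩

lemma IsWalk.sum_boundary [DecidableEq V] {u w : V} {l : List E} (h : H.IsWalk F u l w)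
    (X : Finset V) :
    (l.map (H.boundary X)).sum = (if u ∈ X then 1 else 0) - (if w ∈ X then 1 else 0) := by
  induction l generalizing u with
  | nil => obtain rfl : u = w := h; simp
  | cons e l ih =>
    obtain ⟨-, rfl, hl⟩ := h
    rw [List.map_cons, List.sum_cons, ih hl, boundary]
    ring

lemma boundary_residual [DecidableEq V] {G : Digraph' V E} {f : E → ℕ} {e : E} (hf : f e ≤ 1)
    (X : Finset V) : (G.residual f).boundary X e = (1 - 2 * f e) * G.boundary X e := by
  rcases (by omega : f e = 0 ∨ f e = 1) with h | h <;> simp [residual, boundary, h]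

variable [DecidableEq V] [Fintype E] [DecidableEq E] {G : Digraph' V E}

def flipAlong (f : E → ℕ) (l : List E) (e : E) : ℕ :=
  if e ∈ l then 1 - f e else f e

lemma netOut_flipAlong {f : E → ℕ} (hf : ∀ e, f e ≤ 1) {l : List E} (hl : l.Nodup)
    (X : Finset V) :
    G.netOut (fun e => flipAlong f l e) X =
      G.netOut (fun e => f e) X + (l.map ((G.residual f).boundary X)).sum := by
  have hterm : ∀ e, (flipAlong f l e : ℤ) * G.boundary X e =
      f e * G.boundary X e + if e ∈ l.toFinset then (G.residual f).boundary X e else 0 := by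
    intro e
    rw [boundary_residual (hf e), flipAlong]
    simp only [List.mem_toFinset]
    split_ifs
    · push_cast [Nat.cast_sub (hf e)]
      ring
    · ring
  simp only [netOut, hterm, sum_add_distrib, sum_ite_mem, univ_inter, List.sum_toFinset _ hl]

theorem exists_flowValue_succ_of_reachAvoid_residual {s t : V} (hst : s ≠ t) {f : E → ℕ}
    (hf : G.IsFlow s t f) (hfF : ∀ e ∈ F, f e = 0) (h : (G.residual f).ReachAvoid F s t) :
    ∃ f', G.IsFlow s t f' ∧ (∀ e ∈ F, f' e = 0) ∧
      G.flowValue s f' = G.flowValue s f + 1 := by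
  obtain ⟨l₀, hl₀⟩ := exists_isWalk_of_reachAvoid h
  obtain ⟨l, hl, hnd⟩ := hl₀.exists_nodup
  have hflip (X : Finset V) : G.netOut (fun e => flipAlong f l e) X =
      G.netOut (fun e => f e) X + ((if s ∈ X then 1 else 0) - (if t ∈ X then 1 else 0)) := by
    rw [netOut_flipAlong hf.1 ((List.nodup_cons.1 hnd).2.of_map _), hl.sum_boundary]
  refine ⟨flipAlong f l, ⟨fun e => ?_, (G.conserves_iff s t _).2 fun v hvs hvt => ?_⟩,
    fun e he => ?_, ?_⟩
  · have := hf.1 e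
    unfold flipAlong
    split_ifs <;> omega
  · rw [hflip, (G.conserves_iff s t f).1 hf.2 v hvs hvt]
    simp [hvs.symm, hvt.symm]
  · have hel : e ∉ l := fun hel => hl.notMem hel he
    simp [flipAlong, hel, hfF e he]
  · rw [flowValue_eq_netOut, flowValue_eq_netOut, hflip]
    simp [hst.symm]

end AugmentingPaths

section MaxFlowMinCut

variable [Fintype V] [DecidableEq V] [Fintype E] [DecidableEq E] {G : Digraph' V E} {s t : V}

theorem exists_flowValue_eq_card_sdiff (hst : s ≠ t) (F : Finset E) :
    ∃ f, G.IsFlow s t f ∧ (∀ e ∈ F, f e = 0) ∧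
      ∃ C, G.IsCut s t C ∧ G.flowValue s f = #(C \ F) := by
  obtain ⟨_, ⟨f, hf, hfF, rfl⟩, hmax⟩ := Int.exists_greatest_of_bdd
    (P := fun m => ∃ f, G.IsFlow s t f ∧ (∀ e ∈ F, f e = 0) ∧ G.flowValue s f = m)
    ⟨#(univ \ F), by
      rintro _ ⟨f, hf, hfF, rfl⟩
      exact flowValue_le_card_sdiff hf hfF (isCut_univ hst)⟩
    ⟨0, fun _ => 0, ⟨fun _ => zero_le_one, fun _ _ _ => by simp⟩, fun _ _ => rfl,
      by simp [flowValue]⟩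
  refine ⟨f, hf, hfF, exists_isCut_of_not_reachAvoid_residual hf hfF fun h => ?_⟩
  obtain ⟨f', hf', hf'F, hval⟩ := exists_flowValue_succ_of_reachAvoid_residual hst hf hfF h
  have := hmax _ ⟨f', hf', hf'F, rfl⟩
  omega

theorem isMaxFlowValue_iff (hst : s ≠ t) {F : Finset E} {m : ℤ} :
    G.IsMaxFlowValue s t F m ↔
      (∀ C, G.IsCut s t C → m ≤ #(C \ F)) ∧ ∃ C, G.IsCut s t C ∧ #(C \ F) = m := by
  obtain ⟨g, hg, hgF, C₀, hC₀, hgC₀⟩ := exists_flowValue_eq_card_sdiff (G := G) hst F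
  constructor
  · rintro ⟨⟨f, hf, hfF, rfl⟩, hmax⟩
    refine ⟨fun C hC => flowValue_le_card_sdiff hf hfF hC, C₀, hC₀, le_antisymm ?_ ?_⟩
    · exact hgC₀ ▸ hmax g hg hgF
    · exact flowValue_le_card_sdiff hf hfF hC₀
  · rintro ⟨hmin, C, hC, rfl⟩
    refine ⟨⟨g, hg, hgF, le_antisymm (flowValue_le_card_sdiff hg hgF hC) ?_⟩,
      fun f hf hfF => flowValue_le_card_sdiff hf hfF hC⟩
    exact hgC₀ ▸ hmin C₀ hC₀

end MaxFlowMinCut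

end Digraph'

theorem stmt13_general {V E : Type} [Fintype V] [DecidableEq V] [Fintype E] [DecidableEq E]
    (G : Digraph' V E) (s t : V) (hst : s ≠ t)
    (lam k : ℕ) (hmax : G.IsMaxFlowValue s t ∅ lam)
    (F : Finset E) (hF : F.card = k) :
    G.IsMaxFlowValue s t F ((lam : ℤ) - k) ↔
      ∃ C : Finset E, G.IsMinCut s t C ∧ F ⊆ C := by
  rw [Digraph'.isMaxFlowValue_iff hst] at hmax ⊢
  simp only [sdiff_empty, Nat.cast_le, Nat.cast_inj] at hmax
  obtain ⟨hlam_le, C₀, hC₀, hC₀lam⟩ := hmax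
  have hsplit (C : Finset E) : #(C \ F) + #(C ∩ F) = #C := card_sdiff_add_card_inter C F
  have hinter (C : Finset E) : #(C ∩ F) ≤ k := hF ▸ card_le_card inter_subset_right
  constructor
  · rintro ⟨-, C, hC, hCF⟩
    have hCk : #(C ∩ F) = k := by
      have := hsplit C; have := hinter C; have := hlam_le C hC; omega
    have hFC : F ⊆ C := inter_eq_right.1 (eq_of_subset_of_card_le inter_subset_right (by omega))
    refine ⟨C, ⟨hC, fun C' hC' => ?_⟩, hFC⟩
    have := hsplit C; have := hlam_le C' hC'
    omega
  · rintro ⟨D, ⟨hD, hDmin⟩, hFD⟩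
    have hDlam : #D = lam := le_antisymm (hC₀lam ▸ hDmin C₀ hC₀) (hlam_le D hD)
    refine ⟨fun C hC => ?_, D, hD, ?_⟩
    · have := hsplit C; have := hinter C; have := hlam_le C hC
      omega
    · have := card_le_card hFD
      rw [card_sdiff_of_subset hFD, hDlam, hF]
      omega

/-- Let `F` be a set of `k ≤ λ` edges of `G`. Then the maximum
`(s,t)`-flow value of `G − F` equals `λ − k` iff some `(s,t)`-min-cut of `G` contains
all the edges of `F`. -/
theorem stmt13 {V E : Type} [Fintype V] [DecidableEq V] [Fintype E] [DecidableEq E]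
    (G : Digraph' V E) (s t : V) (hst : s ≠ t)
    (lam k : ℕ) (hmax : G.IsMaxFlowValue s t ∅ lam)
    (F : Finset E) (hF : F.card = k) (hk : k ≤ lam) :
    G.IsMaxFlowValue s t F ((lam : ℤ) - k) ↔
      ∃ C : Finset E, G.IsMinCut s t C ∧ F ⊆ C :=
  stmt13_general G s t hst lam k hmax F hF
end
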